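/- arXiv:2504.17032 — 2 statements merged into one kernel-verified Lean document; each statement's English description precedes it below -/
import Mathlib

section
/- ∫_{−∞}^{∞} |R(x)|²·e^{−x²/(2·Y₂²)} dx ≥ √(2π)·Y₂·exp(|𝓜|/7). -/
/-!
Write `r_λ = e^{-λ/(2α)}`, so that `e^{-1} ≤ r_λ < 1` and the factor of `R` at `λ` is the sum of
the geometric series `∑_m (r_λ e^{iλx})^m`. Truncating every series at `m < n` turns
`R` into an exponential polynomial `∑_p c_p e^{iμ_p x}` with coefficients `c_p ≥ 0`. Against the
weight `e^{-b x²}`, `b = 1/(2Y₂²)`, each cross term integrates to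
`c_p c_q √(π/b) e^{-(μ_p - μ_q)²/(4b)} ≥ 0`, so the diagonal alone gives the lower bound
`√(2π) Y₂ ∏_λ ∑_{m<n} r_λ^{2m}`. The truncation costs at most a factor `∏_λ (1 + r_λ^n)` pointwise,
and `n → ∞` gives `√(2π) Y₂ ∏_λ (1 - r_λ²)⁻¹ ≤ ∫ |R|² e^{-b x²}`. Finally
`(1 - r_λ²)⁻¹ ≥ (1 - e^{-2})⁻¹ ≈ 1.1565 > e^{1/7} ≈ 1.1536`.
-/

open Real Filter Finset MeasureTheory

/-- The resonator `R(x) = ∏_{λ ∈ 𝓜} (1 − e^{−λ/(2α)} e^{iλx})⁻¹`. -/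
noncomputable def resonator (α : ℝ) (𝓜 : Finset ℝ) (x : ℝ) : ℂ :=
  ∏ l ∈ 𝓜, (1 - (Real.exp (-l / (2 * α)) : ℂ) * Complex.exp ((l * x : ℝ) * Complex.I))⁻¹

theorem norm_geom_sum_le {K : Type*} [NormedField K] {z : K} (hz : z ≠ 1) (n : ℕ) :
    ‖∑ m ∈ range n, z ^ m‖ ≤ (1 + ‖z‖ ^ n) * ‖(1 - z)⁻¹‖ := by
  rw [← mul_inv_cancel_right₀ (sub_ne_zero.2 hz.symm) (∑ m ∈ range n, z ^ m), geom_sum_mul_neg,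
    norm_mul, ← norm_pow]
  gcongr
  exact norm_sub_le _ _ |>.trans (by rw [norm_one])

theorem norm_inv_one_sub_le {K : Type*} [NormedField K] {z : K} (hz : ‖z‖ < 1) :
    ‖(1 - z)⁻¹‖ ≤ (1 - ‖z‖)⁻¹ := by
  rw [norm_inv]
  exact inv_anti₀ (by linarith) (by simpa using norm_sub_norm_le (1 : K) z)

theorem norm_prod_geom_sum_le {ι K : Type*} [NormedField K] (s : Finset ι) {z : ι → K}
    (hz : ∀ i ∈ s, z i ≠ 1) (n : ℕ) :
    ‖∏ i ∈ s, ∑ m ∈ range n, z i ^ m‖ ≤ (∏ i ∈ s, (1 + ‖z i‖ ^ n)) * ‖∏ i ∈ s, (1 - z i)⁻¹‖ := by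
  rw [norm_prod, norm_prod, ← prod_mul_distrib]
  exact prod_le_prod (fun _ _ => norm_nonneg _) fun i hi => norm_geom_sum_le (hz i hi) n

section GaussianWeight

open Complex Topology

theorem integral_cos_mul_exp_neg_mul_sq {b : ℝ} (hb : 0 < b) (t : ℝ) :
    ∫ x : ℝ, Real.cos (t * x) * rexp (-b * x ^ 2) = √(π / b) * rexp (-t ^ 2 / (4 * b)) := by
  have hb' : 0 < (b : ℂ).re := by simpa using hb
  have hre (x : ℝ) : (cexp (I * t * x) * cexp (-b * x ^ 2)).re
      = Real.cos (t * x) * rexp (-b * x ^ 2) := by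
    rw [show I * t * x = ((t * x : ℝ) : ℂ) * I by push_cast; ring,
      show (-b * x ^ 2 : ℂ) = ((-b * x ^ 2 : ℝ) : ℂ) by push_cast; ring, ← ofReal_exp,
      re_mul_ofReal, exp_ofReal_mul_I_re]
  have hint : Integrable fun x : ℝ => cexp (I * t * x) * cexp (-b * x ^ 2) :=
    (integrable_cexp_quadratic hb' (I * t) 0).congr
      (ae_of_all _ fun x => by simp only [← Complex.exp_add]; ring_nf)
  have hsqrt : ((π / b : ℂ)) ^ (1 / 2 : ℂ) = (√(π / b) : ℂ) := by
    rw [Real.sqrt_eq_rpow, ofReal_cpow (by positivity)]; push_cast; ring_nf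
  have hexp : cexp (-(t : ℂ) ^ 2 / (4 * b)) = (rexp (-t ^ 2 / (4 * b)) : ℂ) := by
    push_cast; ring_nf
  calc ∫ x : ℝ, Real.cos (t * x) * rexp (-b * x ^ 2)
      = (∫ x : ℝ, cexp (I * t * x) * cexp (-b * x ^ 2)).re := by
        simp only [← hre]; exact integral_re hint
    _ = √(π / b) * rexp (-t ^ 2 / (4 * b)) := by
        rw [fourierIntegral_gaussian hb', hsqrt, hexp, ← ofReal_mul, ofReal_re]

theorem integrable_cos_mul_exp_neg_mul_sq {b : ℝ} (hb : 0 < b) (t : ℝ) :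
    Integrable fun x : ℝ => Real.cos (t * x) * rexp (-b * x ^ 2) :=
  (integrable_exp_neg_mul_sq hb).bdd_mul (c := 1) (by fun_prop)
    (ae_of_all _ fun x => by simpa using Real.abs_cos_le_one (t * x))

theorem norm_sum_mul_cexp_sq {ι : Type*} (s : Finset ι) (c μ : ι → ℝ) (x : ℝ) :
    ‖∑ i ∈ s, (c i : ℂ) * cexp ((μ i * x : ℝ) * I)‖ ^ 2 =
      ∑ i ∈ s, ∑ j ∈ s, c i * c j * Real.cos ((μ i - μ j) * x) := by
  rw [Complex.sq_norm, ← ofReal_re (normSq _), ← mul_conj, map_sum, sum_mul_sum, re_sum]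
  refine sum_congr rfl fun i _ => (re_sum _ _).trans (sum_congr rfl fun j _ => ?_)
  rw [map_mul, conj_ofReal, ← exp_conj, map_mul, conj_ofReal, conj_I,
    show (c i : ℂ) * cexp ((μ i * x : ℝ) * I) * ((c j : ℂ) * cexp ((μ j * x : ℝ) * -I))
      = ((c i * c j : ℝ) : ℂ) * cexp (((μ i - μ j) * x : ℝ) * I) by
        rw [mul_mul_mul_comm, ← Complex.exp_add]; push_cast; ring_nf,
    re_ofReal_mul, exp_ofReal_mul_I_re]

theorem sqrt_mul_sum_sq_le_integral_norm_sum_mul_cexp_sq {ι : Type*} (s : Finset ι)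
    {c : ι → ℝ} (hc : ∀ i ∈ s, 0 ≤ c i) (μ : ι → ℝ) {b : ℝ} (hb : 0 < b) :
    √(π / b) * ∑ i ∈ s, c i ^ 2 ≤
      ∫ x : ℝ, ‖∑ i ∈ s, (c i : ℂ) * cexp ((μ i * x : ℝ) * I)‖ ^ 2 *
        rexp (-b * x ^ 2) := by
  have hint (i j : ι) : Integrable fun x : ℝ =>
      c i * (c j * (Real.cos ((μ i - μ j) * x) * rexp (-b * x ^ 2))) :=
    ((integrable_cos_mul_exp_neg_mul_sq hb _).const_mul _).const_mul _
  simp only [norm_sum_mul_cexp_sq, sum_mul, mul_assoc]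
  rw [integral_finsetSum _ fun i _ => integrable_finsetSum _ fun j _ => hint i j]
  simp only [integral_finsetSum _ fun j _ => hint _ j, integral_const_mul,
    integral_cos_mul_exp_neg_mul_sq hb, mul_sum]
  refine sum_le_sum fun i hi => ?_
  calc √(π / b) * c i ^ 2
      = c i * (c i * (√(π / b) * rexp (-(μ i - μ i) ^ 2 / (4 * b)))) := by
        rw [sub_self, zero_pow two_ne_zero, neg_zero, zero_div, Real.exp_zero]; ring
    _ ≤ ∑ j ∈ s, c i * (c j * (√(π / b) * rexp (-(μ i - μ j) ^ 2 / (4 * b)))) :=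
        single_le_sum (f := fun j => c i * (c j * (√(π / b) * rexp (-(μ i - μ j) ^ 2 / (4 * b)))))
          (fun j hj => by have := hc i hi; have := hc j hj; positivity) hi

variable {ι : Type*} [Fintype ι]

theorem prod_geom_sum_mul_cexp_eq_sum [DecidableEq ι] (a ν : ι → ℝ) (n : ℕ) (x : ℝ) :
    ∏ i, ∑ m ∈ range n, ((a i : ℂ) * cexp ((ν i * x : ℝ) * I)) ^ m =
      ∑ p ∈ Fintype.piFinset fun _ => range n,
        ((∏ i, a i ^ p i : ℝ) : ℂ) * cexp (((∑ i, p i * ν i) * x : ℝ) * I) := by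
  rw [prod_univ_sum]
  refine sum_congr rfl fun p _ => ?_
  simp only [mul_pow, prod_mul_distrib, ← Complex.exp_nat_mul, ← Complex.exp_sum]
  push_cast
  congr 2
  rw [sum_mul, sum_mul]
  exact sum_congr rfl fun i _ => by ring

theorem sqrt_mul_prod_geom_sum_le_integral {a : ι → ℝ} (ha : ∀ i, 0 ≤ a i) (ν : ι → ℝ) (n : ℕ)
    {b : ℝ} (hb : 0 < b) :
    √(π / b) * ∏ i, ∑ m ∈ range n, (a i ^ 2) ^ m ≤
      ∫ x : ℝ, ‖∏ i, ∑ m ∈ range n, ((a i : ℂ) * cexp ((ν i * x : ℝ) * I)) ^ m‖ ^ 2 *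
        rexp (-b * x ^ 2) := by
  classical
  simp only [prod_geom_sum_mul_cexp_eq_sum]
  convert sqrt_mul_sum_sq_le_integral_norm_sum_mul_cexp_sq _ (c := fun p : ι → ℕ => ∏ i, a i ^ p i)
    (fun p _ => prod_nonneg fun i _ => pow_nonneg (ha i) (p i)) _ hb using 2
  rw [prod_univ_sum]
  refine sum_congr rfl fun p _ => ?_
  simp only [← prod_pow, ← pow_mul, mul_comm]

theorem sqrt_mul_prod_inv_one_sub_sq_le_integral {a : ι → ℝ} (ha₀ : ∀ i, 0 ≤ a i)
    (ha₁ : ∀ i, a i < 1) (ν : ι → ℝ) {b : ℝ} (hb : 0 < b) :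
    √(π / b) * ∏ i, (1 - a i ^ 2)⁻¹ ≤
      ∫ x : ℝ, ‖∏ i, (1 - (a i : ℂ) * cexp ((ν i * x : ℝ) * I))⁻¹‖ ^ 2 * rexp (-b * x ^ 2) := by
  set z : ι → ℝ → ℂ := fun i x => (a i : ℂ) * cexp ((ν i * x : ℝ) * I)
  set J := ∫ x : ℝ, ‖∏ i, (1 - z i x)⁻¹‖ ^ 2 * rexp (-b * x ^ 2)
  have hz (i : ι) (x : ℝ) : ‖z i x‖ = a i := by
    rw [norm_mul, norm_exp_ofReal_mul_I, mul_one, norm_real, Real.norm_of_nonneg (ha₀ i)]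
  have hz_ne (i : ι) (x : ℝ) : z i x ≠ 1 := fun h => (ha₁ i).ne' (by simpa [h] using hz i x)
  have hint : Integrable fun x => ‖∏ i, (1 - z i x)⁻¹‖ ^ 2 * rexp (-b * x ^ 2) := by
    refine (integrable_exp_neg_mul_sq hb).bdd_mul (c := (∏ i, (1 - a i)⁻¹) ^ 2)
      (by fun_prop) (ae_of_all _ fun x => ?_)
    rw [norm_pow, norm_norm, norm_prod]
    gcongr with i
    simpa only [hz] using norm_inv_one_sub_le ((hz i x).trans_lt (ha₁ i))
  have htrunc (n : ℕ) :
      √(π / b) * ∏ i, ∑ m ∈ range n, (a i ^ 2) ^ m ≤ (∏ i, (1 + a i ^ n)) ^ 2 * J := by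
    refine (sqrt_mul_prod_geom_sum_le_integral ha₀ ν n hb).trans ?_
    rw [← integral_const_mul]
    refine integral_mono_of_nonneg (ae_of_all _ fun x => by positivity) (hint.const_mul _)
      (ae_of_all _ fun x => ?_)
    have := norm_prod_geom_sum_le univ (fun i _ => hz_ne i x) n
    simp only [hz] at this
    dsimp only
    rw [← mul_assoc, ← mul_pow]
    exact mul_le_mul_of_nonneg_right (pow_le_pow_left₀ (norm_nonneg _) this 2) (by positivity)
  have hlhs : Tendsto (fun n => √(π / b) * ∏ i, ∑ m ∈ range n, (a i ^ 2) ^ m) atTop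
      (𝓝 (√(π / b) * ∏ i, (1 - a i ^ 2)⁻¹)) :=
    (tendsto_finsetProd _ fun i _ => (hasSum_geometric_of_lt_one (sq_nonneg _)
      (by nlinarith [ha₀ i, ha₁ i])).tendsto_sum_nat).const_mul _
  have hrhs : Tendsto (fun n => (∏ i, (1 + a i ^ n)) ^ 2 * J) atTop (𝓝 J) := by
    simpa using ((tendsto_finsetProd _ fun i _ =>
      (tendsto_pow_atTop_nhds_zero_of_lt_one (ha₀ i) (ha₁ i)).const_add 1).pow 2).mul_const J
  exact le_of_tendsto_of_tendsto' hlhs hrhs htrunc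

end GaussianWeight

theorem exp_one_div_seven_le_inv_one_sub {y : ℝ} (hy : rexp (-2) ≤ y) (hy1 : y < 1) :
    rexp (1 / 7) ≤ (1 - y)⁻¹ := by
  have hexp : rexp (1 / 7) ≤ 1.1536 := by
    refine le_of_pow_le_pow_left₀ (n := 7) (by norm_num) (by norm_num) ?_
    rw [← Real.exp_nat_mul]
    norm_num
    linarith [exp_one_lt_d9]
  have hexp_neg : 0.1353 ≤ rexp (-2) := by
    rw [show (-2 : ℝ) = (2 : ℕ) * -1 by norm_num, Real.exp_nat_mul]
    nlinarith [exp_neg_one_gt_d9]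
  rw [← one_div, le_div_iff₀ (by linarith)]
  nlinarith [exp_pos (1 / 7)]

theorem resonator_mean_square_lower_bound_general (α C₁ Y₂ : ℝ) (hα : 0 < α)
    (hC₁ : 0 < C₁) (hY₂ : 0 < Y₂)
    (𝓜 : Finset ℝ) (h𝓜 : ∀ l ∈ 𝓜, C₁ * α ≤ l ∧ l ≤ 2 * α) :
    Real.sqrt (2 * Real.pi) * Y₂ * Real.exp ((𝓜.card : ℝ) / 7) ≤
      ∫ x : ℝ, ‖resonator α 𝓜 x‖ ^ 2 * Real.exp (-x ^ 2 / (2 * Y₂ ^ 2)) := by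
  set r : ℝ → ℝ := fun l => rexp (-l / (2 * α))
  have hr_sq (l : ℝ) : r l ^ 2 = rexp (-l / α) := by
    rw [← Real.exp_nat_mul]; congr 1; field_simp; push_cast; ring
  have hr_lt_one : ∀ l ∈ 𝓜, r l < 1 := fun l hl => by
    have : 0 < l := lt_of_lt_of_le (by positivity) (h𝓜 l hl).1
    exact Real.exp_lt_one_iff.2 (by rw [neg_div]; exact neg_neg_of_pos (by positivity))
  have hfactor : ∀ l ∈ 𝓜, rexp (1 / 7) ≤ (1 - r l ^ 2)⁻¹ := fun l hl => by
    refine exp_one_div_seven_le_inv_one_sub ?_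
      (by nlinarith [exp_pos (-l / (2 * α)), hr_lt_one l hl])
    rw [hr_sq, exp_le_exp, neg_div, neg_le_neg_iff, div_le_iff₀ hα]
    linarith [(h𝓜 l hl).2]
  have hb : 0 < (2 * Y₂ ^ 2)⁻¹ := by positivity
  have key := sqrt_mul_prod_inv_one_sub_sq_le_integral (ι := 𝓜) (a := fun l => r l)
    (fun _ => (exp_pos _).le) (fun l => hr_lt_one l l.2) (fun l => l) hb
  rw [prod_coe_sort 𝓜 (fun l => (1 - r l ^ 2)⁻¹)] at key
  calc √(2 * π) * Y₂ * rexp (𝓜.card / 7)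
      = √(π / (2 * Y₂ ^ 2)⁻¹) * ∏ _l ∈ 𝓜, rexp (1 / 7) := by
        rw [prod_const, ← Real.exp_nat_mul, div_inv_eq_mul,
          show π * (2 * Y₂ ^ 2) = 2 * π * Y₂ ^ 2 by ring, Real.sqrt_mul' _ (sq_nonneg Y₂),
          Real.sqrt_sq hY₂.le]
        ring_nf
    _ ≤ √(π / (2 * Y₂ ^ 2)⁻¹) * ∏ l ∈ 𝓜, (1 - r l ^ 2)⁻¹ := by gcongr with l hl; exact hfactor l hl
    _ ≤ _ := key
    _ = _ := by
        congr 1; funext x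
        rw [resonator, ← prod_coe_sort 𝓜]
        congr 2; ring

theorem resonator_mean_square_lower_bound (α C₁ Y₂ : ℝ) (hα : 0 < α)
    (hC₁ : 0 < C₁) (hC₁2 : C₁ < 2) (hY₂ : 0 < Y₂)
    (𝓜 : Finset ℝ) (h𝓜 : ∀ l ∈ 𝓜, C₁ * α ≤ l ∧ l ≤ 2 * α)
    (hind : LinearIndependent ℚ (fun t : {y : ℝ // y ∈ 𝓜} => (t : ℝ))) :
    Real.sqrt (2 * Real.pi) * Y₂ * Real.exp ((𝓜.card : ℝ) / 7) ≤
      ∫ x : ℝ, ‖resonator α 𝓜 x‖ ^ 2 * Real.exp (-x ^ 2 / (2 * Y₂ ^ 2)) :=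
  resonator_mean_square_lower_bound_general α C₁ Y₂ hα hC₁ hY₂ 𝓜 h𝓜
end

section
/- There exists an absolute constant C > 0 such that, under the setup below, | ∫_{−∞}^{∞} ∫_{X^{A₄}}^{∞} F₀(x + u)·(sin(αu)/u)²·e^{−2iαu}·|R(x)|²·Φ(x/Y₂) du dx | ≤ C·X^{−A₄}·( Σ_{n=1}^{N} a_n )·I₂. -/
open Real Filter Finset MeasureTheory

lemma norm_inv_one_sub_le_s14 {𝕜 : Type*} [NormedDivisionRing 𝕜] {c : 𝕜} (hc : ‖c‖ < 1) :
    ‖(1 - c)⁻¹‖ ≤ (1 - ‖c‖)⁻¹ := by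
  rw [norm_inv]
  refine inv_anti₀ (by linarith) ?_
  simpa using norm_sub_norm_le (1 : 𝕜) c

lemma norm_resonator_term (α l x : ℝ) :
    ‖(Real.exp (-l / (2 * α)) : ℂ) * Complex.exp ((l * x : ℝ) * Complex.I)‖ =
      Real.exp (-l / (2 * α)) := by
  rw [norm_mul, Complex.norm_real, Complex.norm_exp_ofReal_mul_I,
    Real.norm_of_nonneg (Real.exp_pos _).le, mul_one]

section Resonator

variable {α : ℝ} {𝓜 : Finset ℝ}

lemma exp_neg_div_two_mul_lt_one {l : ℝ} (hα : 0 < α) (hl : 0 < l) :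
    Real.exp (-l / (2 * α)) < 1 := by
  rw [Real.exp_lt_one_iff, neg_div, neg_lt_zero]
  positivity

lemma norm_resonator_le (hα : 0 < α) (h𝓜 : ∀ l ∈ 𝓜, 0 < l) (x : ℝ) :
    ‖resonator α 𝓜 x‖ ≤ ∏ l ∈ 𝓜, (1 - Real.exp (-l / (2 * α)))⁻¹ := by
  rw [resonator, norm_prod]
  refine prod_le_prod (fun _ _ => norm_nonneg _) fun l hl => ?_
  simpa only [norm_resonator_term] using norm_inv_one_sub_le_s14
    ((norm_resonator_term α l x).trans_lt (exp_neg_div_two_mul_lt_one hα (h𝓜 l hl)))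

lemma continuous_resonator (hα : 0 < α) (h𝓜 : ∀ l ∈ 𝓜, 0 < l) :
    Continuous (resonator α 𝓜) := by
  unfold resonator
  refine continuous_finsetProd _ fun l hl => Continuous.inv₀ (by fun_prop) fun x h => ?_
  have hnorm := norm_resonator_term α l x
  rw [← sub_eq_zero.1 h, norm_one] at hnorm
  exact (exp_neg_div_two_mul_lt_one hα (h𝓜 l hl)).ne' hnorm

lemma integrable_norm_resonator_sq_mul (hα : 0 < α) (h𝓜 : ∀ l ∈ 𝓜, 0 < l) {φ : ℝ → ℝ}
    (hφ : Integrable φ) : Integrable fun x => ‖resonator α 𝓜 x‖ ^ 2 * φ x :=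
  hφ.bdd_mul ((continuous_resonator hα h𝓜).norm.pow 2).aestronglyMeasurable <|
    ae_of_all _ fun x => by
      rw [norm_pow, norm_norm]
      exact pow_le_pow_left₀ (norm_nonneg _) (norm_resonator_le hα h𝓜 x) 2

end Resonator

lemma integrable_exp_neg_div_sq_div_two {Y : ℝ} (hY : Y ≠ 0) :
    Integrable fun x : ℝ => Real.exp (-(x / Y) ^ 2 / 2) := by
  have h : (fun x : ℝ => Real.exp (-(x / Y) ^ 2 / 2)) =
      fun x => Real.exp (-(1 / (2 * Y ^ 2)) * x ^ 2) := by
    funext x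
    congr 1
    field_simp
  rw [h]
  exact integrable_exp_neg_mul_sq (by positivity)

lemma norm_setIntegral_Ioi_le_of_norm_le_mul_inv_sq {E : Type*} [NormedAddCommGroup E]
    [NormedSpace ℝ E] {f : ℝ → E} {S T : ℝ} (hT : 0 < T)
    (hf : ∀ u > T, ‖f u‖ ≤ S * (u ^ 2)⁻¹) : ‖∫ u in Set.Ioi T, f u‖ ≤ S / T := by
  have hrpow : ∀ u > T, (u ^ 2)⁻¹ = u ^ (-2 : ℝ) := fun u hu => by
    rw [Real.rpow_neg (hT.trans hu).le, Real.rpow_two]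
  calc ‖∫ u in Set.Ioi T, f u‖ ≤ ∫ u in Set.Ioi T, S * u ^ (-2 : ℝ) :=
        norm_integral_le_of_norm_le ((integrableOn_Ioi_rpow_of_lt (by norm_num) hT).const_mul S)
          ((ae_restrict_mem measurableSet_Ioi).mono fun u hu => hrpow u hu ▸ hf u hu)
    _ = S / T := by
        rw [integral_const_mul, integral_Ioi_rpow_of_lt (by norm_num) hT]
        norm_num [Real.rpow_neg_one, div_eq_mul_inv]

lemma sq_sin_div_le_inv_sq (y u : ℝ) : (Real.sin y / u) ^ 2 ≤ (u ^ 2)⁻¹ := by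
  rw [div_pow, div_eq_mul_inv]
  exact mul_le_of_le_one_left (by positivity) (sin_sq_le_one y)

lemma norm_mul_sq_sin_div_mul_exp_le (F α u : ℝ) :
    ‖(F : ℂ) * (((Real.sin (α * u) / u) ^ 2 : ℝ) : ℂ) *
        Complex.exp (-(2 * α * u : ℝ) * Complex.I)‖ ≤ |F| * (u ^ 2)⁻¹ := by
  have hexp : ‖Complex.exp (-(2 * α * u : ℝ) * Complex.I)‖ = 1 := by
    rw [← Complex.ofReal_neg, Complex.norm_exp_ofReal_mul_I]
  rw [norm_mul, norm_mul, hexp, mul_one, Complex.norm_real, Complex.norm_real,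
    Real.norm_eq_abs, Real.norm_of_nonneg (sq_nonneg _)]
  exact mul_le_mul_of_nonneg_left (sq_sin_div_le_inv_sq _ _) (abs_nonneg _)

lemma abs_sum_mul_cos_le {ι : Type*} {s : Finset ι} {a θ : ι → ℝ} (ha : ∀ n ∈ s, 0 ≤ a n) :
    |∑ n ∈ s, a n * Real.cos (θ n)| ≤ ∑ n ∈ s, a n :=
  (abs_sum_le_sum_abs _ _).trans <| sum_le_sum fun n hn => by
    rw [abs_mul, abs_of_nonneg (ha n hn)]
    exact mul_le_of_le_one_right (ha n hn) (abs_cos_le_one _)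

theorem convolution_tail_bound :
    ∃ C > 0, ∀ A₁ A₂ A₃ A₄ C₁ X α : ℝ,
      0 < A₄ → A₄ < A₃ → A₃ < A₂ → A₂ < A₁ → 0 < C₁ → C₁ < 2 → 3 ≤ X → 0 < α →
      ∀ lam a : ℕ → ℝ,
      (∀ n ∈ Finset.Icc 1 ⌊X ^ A₁⌋₊, 0 < lam n) →
      (∀ n ∈ Finset.Icc 1 ⌊X ^ A₁⌋₊, 0 ≤ a n) →
      (∀ m ∈ Finset.Icc 1 ⌊X ^ A₁⌋₊, ∀ n ∈ Finset.Icc 1 ⌊X ^ A₁⌋₊, lam m = lam n → m = n) →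
      ∀ 𝓜 : Finset ℝ,
      (∀ t ∈ 𝓜, (∃ n ∈ Finset.Icc 1 ⌊X ^ A₁⌋₊, lam n = t) ∧ C₁ * α ≤ t ∧ t ≤ 2 * α) →
      LinearIndependent ℚ (fun t : {y : ℝ // y ∈ 𝓜} => (t : ℝ)) →
      ‖(∫ x : ℝ, ∫ u in Set.Ioi (X ^ A₄),
          (((∑ n ∈ Finset.Icc 1 ⌊X ^ A₁⌋₊, a n * Real.cos (lam n * (x + u))) : ℝ) : ℂ)
            * (((Real.sin (α * u) / u) ^ 2 : ℝ) : ℂ)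
            * Complex.exp (-(2 * α * u : ℝ) * Complex.I)
            * ((‖resonator α 𝓜 x‖ ^ 2 : ℝ) : ℂ)
            * ((Real.exp (-(x / X ^ A₂) ^ 2 / 2) : ℝ) : ℂ))‖
        ≤ C * X ^ (-A₄) * (∑ n ∈ Finset.Icc 1 ⌊X ^ A₁⌋₊, a n) *
            ∫ x : ℝ, ‖resonator α 𝓜 x‖ ^ 2 * Real.exp (-(x / X ^ A₂) ^ 2 / 2) := by
  refine ⟨1, one_pos, ?_⟩
  intro A₁ A₂ A₃ A₄ C₁ X α _ _ _ _ hC₁ _ hX hα lam a _ ha _ 𝓜 h𝓜 _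
  have hX₀ : 0 < X := by linarith
  have h𝓜₀ : ∀ l ∈ 𝓜, 0 < l := fun l hl => (by positivity : 0 < C₁ * α).trans_le (h𝓜 l hl).2.1
  have hinner : ∀ x : ℝ, ‖∫ u in Set.Ioi (X ^ A₄),
      (((∑ n ∈ Finset.Icc 1 ⌊X ^ A₁⌋₊, a n * Real.cos (lam n * (x + u))) : ℝ) : ℂ)
        * (((Real.sin (α * u) / u) ^ 2 : ℝ) : ℂ)
        * Complex.exp (-(2 * α * u : ℝ) * Complex.I)‖
      ≤ X ^ (-A₄) * ∑ n ∈ Finset.Icc 1 ⌊X ^ A₁⌋₊, a n := fun x => by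
    rw [Real.rpow_neg hX₀.le, inv_mul_eq_div]
    exact norm_setIntegral_Ioi_le_of_norm_le_mul_inv_sq (by positivity) fun u _ =>
      (norm_mul_sq_sin_div_mul_exp_le _ _ _).trans
        (mul_le_mul_of_nonneg_right (abs_sum_mul_cos_le ha) (by positivity))
  have hweight := integrable_norm_resonator_sq_mul hα h𝓜₀
    (integrable_exp_neg_div_sq_div_two (rpow_pos_of_pos hX₀ A₂).ne')
  calc _ ≤ ∫ x : ℝ, X ^ (-A₄) * (∑ n ∈ Finset.Icc 1 ⌊X ^ A₁⌋₊, a n) *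
        (‖resonator α 𝓜 x‖ ^ 2 * Real.exp (-(x / X ^ A₂) ^ 2 / 2)) :=
        norm_integral_le_of_norm_le (hweight.const_mul _) <| ae_of_all _ fun x => by
          rw [integral_mul_const, integral_mul_const, norm_mul, norm_mul, Complex.norm_real,
            Complex.norm_real, Real.norm_of_nonneg (by positivity),
            Real.norm_of_nonneg (by positivity), mul_assoc]
          exact mul_le_mul_of_nonneg_right (hinner x) (by positivity)
    _ = _ := by rw [integral_const_mul, one_mul]
end
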